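/- If H is an induced subgraph of a finite graph G, then dim_poc(H) ≤ dim_poc(G). -/

import Mathlib

/-- `x ≺ y` componentwise strictly. -/
def prec {d : ℕ} (x y : Fin d → ℝ) : Prop := ∀ i, x i < y i

/-- The competition graph of the digraph with arc relation `A`. -/
def competition {V : Type*} (A : V → V → Prop) : SimpleGraph V where
  Adj u v := u ≠ v ∧ ∃ w, A u w ∧ A v w
  symm := by
    constructor
    intro u v h
    exact ⟨h.1.symm, h.2.imp fun w hw => ⟨hw.2, hw.1⟩⟩
  loopless := by
    constructor
    intro u h
    exact h.1 rfl

/-- The competition graph of the `d`-partial order `D_S`. -/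
def compS {d : ℕ} (S : Finset (Fin d → ℝ)) : SimpleGraph S :=
  competition fun x v => prec v.1 x.1

/-- `G` together with `k` added isolated vertices. -/
def addIsolated {V : Type*} (G : SimpleGraph V) (k : ℕ) : SimpleGraph (V ⊕ Fin k) where
  Adj u v := ∃ a b, G.Adj a b ∧ u = Sum.inl a ∧ v = Sum.inl b
  symm := by
    constructor
    rintro u v ⟨a, b, hab, rfl, rfl⟩
    exact ⟨b, a, hab.symm, rfl, rfl⟩
  loopless := by
    constructor
    rintro u ⟨a, b, hab, rfl, h⟩
    exact hab.ne (Sum.inl.inj h)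

/-- `dim_poc G ≤ d`. -/
def pocDimLE {V : Type*} [Fintype V] (G : SimpleGraph V) (d : ℕ) : Prop :=
  ∃ k : ℕ, ∃ S : Finset (Fin d → ℝ), Nonempty (compS S ≃g addIsolated G k)

/-- The partial order competition dimension of `G`. -/
noncomputable def pocDim {V : Type*} [Fintype V] (G : SimpleGraph V) : ℕ :=
  sInf {d | pocDimLE G d}

/-! Deleting from a realizing point set `S` the points of the vertices outside `s` does not
change adjacency among the remaining points, provided every minimal point of `S` is kept:
any common lower bound of two points lies above a minimal point of `S`, which is then a common
lower bound in the smaller set. The minimal points that are kept have no lower bound, so they are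
isolated and only add isolated vertices.

For `pocDim G` to be attained, some dimension must work: with `n = |V|`, put the vertex `v` at
`-e_v` and, for each edge `uv`, a point with coordinates `-2` at `u, v` and `-1/2` elsewhere,
which lies below exactly the two points of `u` and `v`. -/

open Function

section AddIsolated

variable {V W : Type*} {G : SimpleGraph V} {H : SimpleGraph W} {k : ℕ}

@[simp]
lemma addIsolated_adj_inl_inl {a b : V} :
    (addIsolated G k).Adj (Sum.inl a) (Sum.inl b) ↔ G.Adj a b := by
  constructor
  · rintro ⟨a', b', h, ha, hb⟩
    rwa [Sum.inl.inj ha, Sum.inl.inj hb]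
  · exact fun h => ⟨a, b, h, rfl, rfl⟩

lemma addIsolated_not_adj_inr (j : Fin k) (x : V ⊕ Fin k) :
    ¬ (addIsolated G k).Adj (Sum.inr j) x := by
  rintro ⟨a, b, -, h, -⟩
  cases h

variable (G k) in
def addIsolatedEmbedding : G ↪g addIsolated G k where
  toFun := Sum.inl
  inj' := Sum.inl_injective
  map_rel_iff' := addIsolated_adj_inl_inl

lemma exists_iso_addIsolated_iff [Finite W] :
    (∃ k, Nonempty (H ≃g addIsolated G k)) ↔
      ∃ f : G ↪g H, ∀ w ∉ Set.range f, ∀ w', ¬ H.Adj w w' := by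
  classical
  constructor
  · rintro ⟨k, ⟨e⟩⟩
    refine ⟨e.symm.toEmbedding.comp (addIsolatedEmbedding G k), fun w hw w' hadj => ?_⟩
    obtain ⟨j, hj⟩ : ∃ j, e w = Sum.inr j := by
      rcases he : e w with a | j
      · exact absurd ⟨a, e.symm_apply_eq.mpr he.symm⟩ hw
      · exact ⟨j, rfl⟩
    exact addIsolated_not_adj_inr j (e w') (hj ▸ e.map_adj_iff.mpr hadj)
  · rintro ⟨f, hf⟩
    let B := {w // w ∉ Set.range f}
    let φ : V ⊕ Fin (Nat.card B) ≃ W :=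
      (Equiv.sumCongr (Equiv.ofInjective f f.injective) (Finite.equivFin B).symm).trans
        (Equiv.sumCompl _)
    have hφ : ∀ j, φ (Sum.inr j) ∉ Set.range f := fun j => ((Finite.equivFin B).symm j).2
    refine ⟨Nat.card B, ⟨(⟨φ, ?_⟩ : addIsolated G _ ≃g H).symm⟩⟩
    rintro (a | i) (b | j)
    · exact f.map_adj_iff.trans addIsolated_adj_inl_inl.symm
    · exact iff_of_false (fun h => hf _ (hφ j) _ h.symm)
        (fun h => addIsolated_not_adj_inr j _ h.symm)
    · exact iff_of_false (hf _ (hφ i) _) (addIsolated_not_adj_inr i _)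
    · exact iff_of_false (hf _ (hφ i) _) (addIsolated_not_adj_inr i _)

end AddIsolated

section PointSets

variable {d : ℕ} {S T : Finset (Fin d → ℝ)}

lemma lt_of_prec [NeZero d] {x y : Fin d → ℝ} (h : prec x y) : x < y :=
  Pi.lt_def.mpr ⟨fun i => (h i).le, 0, h 0⟩

lemma exists_le_forall_not_prec [NeZero d] {w : Fin d → ℝ} (hw : w ∈ S) :
    ∃ m ∈ S, m ≤ w ∧ ∀ z ∈ S, ¬ prec z m := by
  obtain ⟨m, hmw, hm⟩ := S.exists_le_minimal hw
  exact ⟨m, hm.prop, hmw, fun z hz hzm => hm.not_prop_of_lt (lt_of_prec hzm) hz⟩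

lemma compS_adj {p q : S} :
    (compS S).Adj p q ↔ p ≠ q ∧ ∃ w ∈ S, prec w p ∧ prec w q := by
  simp only [compS, competition, Subtype.exists, exists_prop]

lemma compS_not_adj_of_forall_not_prec {p : S} (hp : ∀ z ∈ S, ¬ prec z p) (q : S) :
    ¬ (compS S).Adj p q := fun h =>
  let ⟨_, w, hw, hwp, _⟩ := compS_adj.mp h
  hp w hw hwp

lemma compS_adj_iff_of_subset (hTS : T ⊆ S) (hT : ∀ p ∈ S, (∀ z ∈ S, ¬ prec z p) → p ∈ T)
    {x y : Fin d → ℝ} (hx : x ∈ T) (hy : y ∈ T) :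
    (compS T).Adj ⟨x, hx⟩ ⟨y, hy⟩ ↔ (compS S).Adj ⟨x, hTS hx⟩ ⟨y, hTS hy⟩ := by
  simp only [compS_adj, ne_eq, Subtype.mk.injEq]
  constructor
  · rintro ⟨hxy, w, hw, hwx, hwy⟩
    exact ⟨hxy, w, hTS hw, hwx, hwy⟩
  · rintro ⟨hxy, w, hw, hwx, hwy⟩
    have : NeZero d := ⟨by rintro rfl; exact hxy (Subsingleton.elim _ _)⟩
    obtain ⟨m, hm, hmw, hmin⟩ := exists_le_forall_not_prec hw
    exact ⟨hxy, m, hT m hm hmin, fun i => (hmw i).trans_lt (hwx i),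
      fun i => (hmw i).trans_lt (hwy i)⟩

end PointSets

lemma pocDimLE_iff {V : Type*} [Fintype V] {G : SimpleGraph V} {d : ℕ} :
    pocDimLE G d ↔ ∃ (S : Finset (Fin d → ℝ)) (f : G ↪g compS S),
      ∀ p ∉ Set.range f, ∀ q, ¬ (compS S).Adj p q := by
  rw [pocDimLE, exists_comm]
  exact exists_congr fun S => exists_iso_addIsolated_iff

lemma pocDimLE_induce {V : Type*} [Fintype V] {G : SimpleGraph V} (s : Set V) [Fintype s]
    {d : ℕ} (h : pocDimLE G d) : pocDimLE (G.induce s) d := by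
  classical
  obtain ⟨S, f, hf⟩ := pocDimLE_iff.mp h
  let T := S.filter fun p => (∃ a ∈ s, (f a : Fin d → ℝ) = p) ∨ ∀ z ∈ S, ¬ prec z p
  have hTS : T ⊆ S := Finset.filter_subset _ _
  have hT : ∀ p ∈ S, (∀ z ∈ S, ¬ prec z p) → p ∈ T :=
    fun p hp hmin => Finset.mem_filter.mpr ⟨hp, Or.inr hmin⟩
  have hfT : ∀ a : s, (f a : Fin d → ℝ) ∈ T :=
    fun a => Finset.mem_filter.mpr ⟨(f a).2, Or.inl ⟨a, a.2, rfl⟩⟩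
  let g : G.induce s ↪g compS T :=
    { toFun := fun a => ⟨f a, hfT a⟩
      inj' := fun a b hab =>
        Subtype.ext <| f.injective <| Subtype.ext (congrArg Subtype.val hab :)
      map_rel_iff' := fun {a b} => by
        simp only [compS_adj_iff_of_subset hTS hT]
        exact f.map_adj_iff }
  refine pocDimLE_iff.mpr ⟨T, g, fun p hp q => ?_⟩
  obtain ⟨-, ⟨a, ha, hap⟩ | hmin⟩ := Finset.mem_filter.mp p.2
  · exact absurd ⟨⟨a, ha⟩, Subtype.ext hap⟩ hp
  · exact compS_not_adj_of_forall_not_prec (fun z hz => hmin z (hTS hz)) q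

section Realization

variable {n : ℕ}

noncomputable def vertexPoint (i : Fin n) : Fin n → ℝ := fun j => if j = i then -1 else 0

noncomputable def edgePoint (i i' : Fin n) : Fin n → ℝ :=
  fun j => if j = i ∨ j = i' then -2 else -1 / 2

lemma vertexPoint_injective : Injective (vertexPoint (n := n)) := by
  intro i j h
  have := congrFun h i
  simp only [vertexPoint] at this
  by_contra hij
  rw [if_neg hij] at this
  norm_num at this

lemma not_prec_vertexPoint (i j : Fin n) : ¬ prec (vertexPoint i) (vertexPoint j) := by
  intro h
  have := h j
  simp only [vertexPoint] at this
  split_ifs at this <;> norm_num at this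

lemma not_prec_edgePoint (x : Fin n → ℝ) (hx : ∀ j, -2 ≤ x j) (i i' : Fin n) :
    ¬ prec x (edgePoint i i') := by
  intro h
  have := h i
  simp only [edgePoint, true_or, if_pos] at this
  linarith [hx i]

lemma neg_two_le_vertexPoint (i j : Fin n) : -2 ≤ vertexPoint i j := by
  unfold vertexPoint; split_ifs <;> norm_num

lemma neg_two_le_edgePoint (i i' j : Fin n) : -2 ≤ edgePoint i i' j := by
  unfold edgePoint; split_ifs <;> norm_num

lemma prec_edgePoint_vertexPoint_iff {i i' j : Fin n} :
    prec (edgePoint i i') (vertexPoint j) ↔ j = i ∨ j = i' := by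
  constructor
  · intro h
    by_contra hj
    have := h j
    simp only [edgePoint, vertexPoint, if_neg hj] at this
    norm_num at this
  · intro hj k
    simp only [edgePoint, vertexPoint]
    split_ifs <;> grind

end Realization

lemma exists_pocDimLE {V : Type*} [Fintype V] (G : SimpleGraph V) : ∃ d, pocDimLE G d := by
  classical
  let ι := Fintype.equivFin V
  let S : Finset (Fin (Fintype.card V) → ℝ) :=
    Finset.univ.image (fun v => vertexPoint (ι v)) ∪
      (Finset.univ.filter fun e : V × V => G.Adj e.1 e.2).image
        fun e => edgePoint (ι e.1) (ι e.2)
  have hvS : ∀ v, vertexPoint (ι v) ∈ S := fun v => by simp [S]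
  have heS : ∀ u v, G.Adj u v → edgePoint (ι u) (ι v) ∈ S := fun u v h => by
    simp only [S, Finset.mem_union, Finset.mem_image, Finset.mem_filter]
    exact Or.inr ⟨(u, v), ⟨Finset.mem_univ _, h⟩, rfl⟩
  have hS : ∀ p ∈ S, (∃ v, vertexPoint (ι v) = p) ∨
      ∃ u v, G.Adj u v ∧ edgePoint (ι u) (ι v) = p := by
    simp [S]
  have hS_ge : ∀ p ∈ S, ∀ j, -2 ≤ p j := by
    intro p hp j
    rcases hS p hp with ⟨v, rfl⟩ | ⟨u, v, -, rfl⟩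
    exacts [neg_two_le_vertexPoint _ _, neg_two_le_edgePoint _ _ _]
  have hvS_adj : ∀ u v, (compS S).Adj ⟨_, hvS u⟩ ⟨_, hvS v⟩ ↔ G.Adj u v := by
    intro u v
    rw [compS_adj, ne_eq, Subtype.mk.injEq, vertexPoint_injective.eq_iff, ι.injective.eq_iff]
    constructor
    · rintro ⟨huv, w, hw, hwu, hwv⟩
      rcases hS w hw with ⟨x, rfl⟩ | ⟨a, b, hab, rfl⟩
      · exact absurd hwu (not_prec_vertexPoint _ _)
      · rw [prec_edgePoint_vertexPoint_iff, ι.injective.eq_iff, ι.injective.eq_iff] at hwu hwv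
        grind [SimpleGraph.adj_symm]
    · exact fun huv => ⟨huv.ne, _, heS u v huv, prec_edgePoint_vertexPoint_iff.mpr (Or.inl rfl),
        prec_edgePoint_vertexPoint_iff.mpr (Or.inr rfl)⟩
  let f : G ↪g compS S :=
    { toFun := fun v => ⟨vertexPoint (ι v), hvS v⟩
      inj' := fun u v h => ι.injective (vertexPoint_injective (congrArg Subtype.val h :))
      map_rel_iff' := hvS_adj _ _ }
  refine ⟨_, pocDimLE_iff.mpr ⟨S, f, fun p hp q => ?_⟩⟩
  rcases hS p p.2 with ⟨v, hv⟩ | ⟨u, v, -, hp_edge⟩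
  · exact absurd ⟨v, Subtype.ext hv⟩ hp
  · refine compS_not_adj_of_forall_not_prec (fun z hz => ?_) q
    rw [← hp_edge]
    exact not_prec_edgePoint z (hS_ge z hz) _ _

/-- The partial order competition dimension of an induced subgraph is at
most that of the whole graph. -/
theorem stmt15 {V : Type*} [Fintype V] (G : SimpleGraph V) (s : Set V) [Fintype s] :
    pocDim (SimpleGraph.induce s G) ≤ pocDim G := by
  obtain ⟨d, hd⟩ := exists_pocDimLE G
  have hG : pocDimLE G (pocDim G) := Nat.sInf_mem (s := {d | pocDimLE G d}) ⟨d, hd⟩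
  exact Nat.sInf_le (pocDimLE_induce s hG)
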